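/- For every integer α ≥ 0 and all real numbers s_1, s_2 with 0 < s_2 < s_1 < 1, it holds that I_{2α,0}(s_1,s_2) = (4π)^{-1/2} ((2α)!/α!) s_1^α (1-s_1)^α. -/

import Mathlib

open MeasureTheory Real

/-- One-dimensional Gaussian heat kernel. -/
noncomputable def g1 (t x : ℝ) : ℝ :=
  (4 * Real.pi * t) ^ (-(1 : ℝ) / 2) * Real.exp (-x ^ 2 / (4 * t))

/-- `I_{α,β}(s₁,s₂) = ∫∫ x^α y^β g(1-s₁,x) g(s₁-s₂,x-y) g(s₂,y) dx dy`. -/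
noncomputable def Iab (α β : ℕ) (s₁ s₂ : ℝ) : ℝ :=
  ∫ x : ℝ, ∫ y : ℝ, x ^ α * y ^ β * g1 (1 - s₁) x * g1 (s₁ - s₂) (x - y) * g1 s₂ y

/-!
Integrating out `y` is the semigroup property `g(s₁ - s₂) ∗ g(s₂) = g(s₁)` of the heat kernel,
which follows from completing the square:
`g(a, x - y) g(b, y) = g(a + b, x) g(ab / (a + b), y - bx / (a + b))`.
The same identity at `x = 0` gives `g(1 - s₁, x) g(s₁, x) = (4π)^{-1/2} g(s₁(1 - s₁), x)`,
so the integral is `(4π)^{-1/2}` times the `2α`-th moment of `g(s₁(1 - s₁), ·)`.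
Gaussian moments come from the integration by parts recursion
`∫ x^(k+2) e^{-bx²} = (k + 1)/(2b) ∫ x^k e^{-bx²}`.
-/

open scoped Nat

section GaussianMoments

variable {b : ℝ}

lemma integrable_pow_mul_exp_neg_mul_sq (hb : 0 < b) (k : ℕ) :
    Integrable fun x : ℝ => x ^ k * exp (-b * x ^ 2) := by
  simpa [Real.rpow_natCast] using
    integrable_rpow_mul_exp_neg_mul_sq hb (by linarith [k.cast_nonneg (α := ℝ)] : (-1 : ℝ) < k)

lemma integral_pow_add_two_mul_exp_neg_mul_sq (hb : 0 < b) (k : ℕ) :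
    ∫ x : ℝ, x ^ (k + 2) * exp (-b * x ^ 2) =
      (k + 1) / (2 * b) * ∫ x : ℝ, x ^ k * exp (-b * x ^ 2) := by
  have hderiv : ∀ x : ℝ, HasDerivAt (fun x => x ^ (k + 1) * exp (-b * x ^ 2))
      ((k + 1 : ℝ) * (x ^ k * exp (-b * x ^ 2)) - 2 * b * (x ^ (k + 2) * exp (-b * x ^ 2))) x := by
    intro x
    refine ((hasDerivAt_pow (k + 1) x).mul
      ((hasDerivAt_pow 2 x).const_mul (-b)).exp).congr_deriv ?_
    push_cast
    ring
  have hk := integrable_pow_mul_exp_neg_mul_sq hb k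
  have hk2 := integrable_pow_mul_exp_neg_mul_sq hb (k + 2)
  have hzero := integral_eq_zero_of_hasDerivAt_of_integrable hderiv
    ((hk.const_mul _).sub (hk2.const_mul _)) (integrable_pow_mul_exp_neg_mul_sq hb (k + 1))
  rw [integral_sub (hk.const_mul _) (hk2.const_mul _), integral_const_mul,
    integral_const_mul] at hzero
  rw [div_mul_eq_mul_div, eq_div_iff (by positivity)]
  linear_combination -hzero

theorem integral_pow_two_mul_mul_exp_neg_mul_sq (hb : 0 < b) (n : ℕ) :
    ∫ x : ℝ, x ^ (2 * n) * exp (-b * x ^ 2) = √(π / b) * (2 * n)! / (n ! * (4 * b) ^ n) := by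
  induction n with
  | zero => simpa using integral_gaussian b
  | succ n ih =>
    rw [show 2 * (n + 1) = 2 * n + 2 by ring, integral_pow_add_two_mul_exp_neg_mul_sq hb, ih,
      Nat.factorial_succ n, show 2 * n + 2 = (2 * n + 1) + 1 by ring,
      Nat.factorial_succ (2 * n + 1), Nat.factorial_succ (2 * n)]
    push_cast
    field_simp
    ring

end GaussianMoments

section HeatKernel

variable {a b t : ℝ}

theorem integral_pow_two_mul_mul_g1 (ht : 0 < t) (n : ℕ) :
    ∫ x : ℝ, x ^ (2 * n) * g1 t x = (2 * n)! / n ! * t ^ n := by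
  have hg : ∀ x : ℝ, x ^ (2 * n) * g1 t x =
      (√(4 * π * t))⁻¹ * (x ^ (2 * n) * exp (-(4 * t)⁻¹ * x ^ 2)) := by
    intro x
    rw [g1, neg_div, rpow_neg (by positivity), ← sqrt_eq_rpow, neg_div, div_eq_inv_mul, ← neg_mul]
    ring
  simp only [hg]
  rw [integral_const_mul, integral_pow_two_mul_mul_exp_neg_mul_sq (by positivity),
    div_inv_eq_mul, mul_comm π, show 4 * (4 * t)⁻¹ = t⁻¹ by field_simp, inv_pow]
  field_simp

theorem integral_g1 (ht : 0 < t) : ∫ x : ℝ, g1 t x = 1 := by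
  simpa using integral_pow_two_mul_mul_g1 ht 0

theorem g1_sub_mul_g1 (ha : 0 < a) (hb : 0 < b) (x y : ℝ) :
    g1 a (x - y) * g1 b y = g1 (a + b) x * g1 (a * b / (a + b)) (y - b * x / (a + b)) := by
  have hcoeff : (4 * π * a) ^ (-(1 : ℝ) / 2) * (4 * π * b) ^ (-(1 : ℝ) / 2) =
      (4 * π * (a + b)) ^ (-(1 : ℝ) / 2) * (4 * π * (a * b / (a + b))) ^ (-(1 : ℝ) / 2) := by
    rw [← mul_rpow (by positivity) (by positivity), ← mul_rpow (by positivity) (by positivity)]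
    congr 1
    field_simp
  have hexp : -(x - y) ^ 2 / (4 * a) + -y ^ 2 / (4 * b) =
      -x ^ 2 / (4 * (a + b)) + -(y - b * x / (a + b)) ^ 2 / (4 * (a * b / (a + b))) := by
    field_simp
    ring
  calc g1 a (x - y) * g1 b y
      = (4 * π * a) ^ (-(1 : ℝ) / 2) * (4 * π * b) ^ (-(1 : ℝ) / 2) *
          exp (-(x - y) ^ 2 / (4 * a) + -y ^ 2 / (4 * b)) := by
        rw [g1, g1, exp_add]; ring
    _ = _ := by
        rw [hcoeff, hexp, exp_add, g1, g1]; ring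

theorem g1_mul_g1 (ha : 0 < a) (hb : 0 < b) (x : ℝ) :
    g1 a x * g1 b x = g1 (a + b) 0 * g1 (a * b / (a + b)) x := by
  simpa [g1] using g1_sub_mul_g1 ha hb 0 x

theorem integral_g1_sub_mul_g1 (ha : 0 < a) (hb : 0 < b) (x : ℝ) :
    ∫ y : ℝ, g1 a (x - y) * g1 b y = g1 (a + b) x := by
  simp only [g1_sub_mul_g1 ha hb x]
  rw [integral_const_mul, integral_sub_right_eq_self (g1 _), integral_g1 (by positivity), mul_one]

end HeatKernel

theorem Iab_even_zero (α : ℕ) (s₁ s₂ : ℝ) (h₀ : 0 < s₂) (h₁ : s₂ < s₁) (h₂ : s₁ < 1) :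
    Iab (2 * α) 0 s₁ s₂ =
      (4 * Real.pi) ^ (-(1 : ℝ) / 2) *
        ((Nat.factorial (2 * α) : ℝ) / (Nat.factorial α : ℝ)) * s₁ ^ α * (1 - s₁) ^ α := by
  have hs₁ : 0 < s₁ := h₀.trans h₁
  have hs₁' : 0 < 1 - s₁ := sub_pos.mpr h₂
  have hinner : ∀ x : ℝ, ∫ y : ℝ, x ^ (2 * α) * y ^ 0 * g1 (1 - s₁) x *
      g1 (s₁ - s₂) (x - y) * g1 s₂ y = g1 1 0 * (x ^ (2 * α) * g1 ((1 - s₁) * s₁) x) := by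
    intro x
    simp only [pow_zero, mul_one, mul_assoc]
    rw [integral_const_mul, integral_const_mul, integral_g1_sub_mul_g1 (sub_pos.mpr h₁) h₀,
      sub_add_cancel, g1_mul_g1 hs₁' hs₁, sub_add_cancel, div_one]
    ring
  rw [Iab, integral_congr_ae (.of_forall hinner), integral_const_mul,
    integral_pow_two_mul_mul_g1 (mul_pos hs₁' hs₁)]
  have hg1 : g1 1 0 = (4 * π) ^ (-(1 : ℝ) / 2) := by simp [g1]
  rw [hg1, mul_pow]
  ring
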